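/- Let V : L¹₀(0,1) → C[0,1] be the operator Vf(t) = ∫₀ᵗ f. For every f ∈ L¹(0,1) with ∫₀¹ f = 0 and ‖f‖₁ ≤ 1, and every u, v ∈ [0,1], one has |Vf(u) − Vf(v)| ≤ 1/2. Consequently the second Kolmogorov number satisfies d₂(V) ≤ 1/4. -/

import Mathlib

open MeasureTheory

noncomputable def muI : Measure ℝ := volume.restrict (Set.Ioc (0:ℝ) 1)

/-- `L¹₀(0,1)`: the subspace of `L¹(0,1)` consisting of functions with zero integral. -/
noncomputable def L10 : Submodule ℝ (Lp ℝ 1 muI) where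
  carrier := {f | ∫ x, f x ∂muI = 0}
  zero_mem' := by
    simp only [Set.mem_setOf_eq]
    rw [integral_congr_ae (Lp.coeFn_zero ℝ 1 muI)]
    simp
  add_mem' := by
    intro f g hf hg
    simp only [Set.mem_setOf_eq] at *
    rw [integral_congr_ae (Lp.coeFn_add f g)]
    simp only [Pi.add_apply]
    rw [integral_add (L1.integrable_coeFn f) (L1.integrable_coeFn g), hf, hg, add_zero]
  smul_mem' := by
    intro c f hf
    simp only [Set.mem_setOf_eq] at *
    rw [integral_congr_ae (Lp.coeFn_smul c f)]
    simp only [Pi.smul_apply]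
    rw [integral_smul, hf, smul_zero]

/-- The sup norm of the Volterra primitive `V f` over `[0,1]`. -/
noncomputable def supV (f : Lp ℝ 1 muI) : ℝ :=
  ⨆ t : Set.Icc (0:ℝ) 1, |∫ s in Set.Ioc (0:ℝ) t.1, f s ∂muI|

/-!
Because `∫₀¹ f = 0`, the integral of `f` over a set `s` is minus its integral over the
complement, so `2 |∫_s f| ≤ ∫_s |f| + ∫_{sᶜ} |f| = ‖f‖₁`. With `s = (v, u]` this bounds the
oscillation of `Vf` by `‖f‖₁ / 2`. A real function of oscillation at most `1/2` stays within
`1/4` of the constant `(sup + inf) / 2`, so the constants realise `d₂(V) ≤ 1/4`.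
-/

open Set
open scoped Interval

theorem norm_setIntegral_le_half_integral_norm_of_integral_eq_zero {α E : Type*}
    [MeasurableSpace α] [NormedAddCommGroup E] [NormedSpace ℝ E] {μ : Measure α} {s : Set α}
    {f : α → E} (hs : NullMeasurableSet s μ) (hf : Integrable f μ) (h0 : ∫ x, f x ∂μ = 0) :
    ‖∫ x in s, f x ∂μ‖ ≤ (∫ x, ‖f x‖ ∂μ) / 2 := by
  have hcompl : ∫ x in s, f x ∂μ = -∫ x in sᶜ, f x ∂μ := by
    rw [eq_neg_iff_add_eq_zero, integral_add_compl₀ hs hf, h0]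
  have hs_le : ‖∫ x in s, f x ∂μ‖ ≤ ∫ x in s, ‖f x‖ ∂μ := norm_integral_le_integral_norm f
  have hsc_le : ‖∫ x in sᶜ, f x ∂μ‖ ≤ ∫ x in sᶜ, ‖f x‖ ∂μ := norm_integral_le_integral_norm f
  have hsplit := integral_add_compl₀ hs hf.norm
  rw [hcompl, norm_neg] at hs_le ⊢
  linarith

theorem abs_setIntegral_Ioc_sub_le {f : ℝ → ℝ} {a b u v : ℝ} (hf : IntegrableOn f (Ioc a b))
    (h0 : ∫ x in Ioc a b, f x = 0) (hu : u ∈ Icc a b) (hv : v ∈ Icc a b) :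
    |(∫ x in Ioc a u, f x) - ∫ x in Ioc a v, f x| ≤ (∫ x in Ioc a b, |f x|) / 2 := by
  have hint : ∀ {w}, w ∈ Icc a b → IntervalIntegrable f volume a w := fun hw =>
    (intervalIntegrable_iff_integrableOn_Ioc_of_le hw.1).mpr
      (hf.mono_set (Ioc_subset_Ioc_right hw.2))
  have hvu : Ι v u ⊆ Ioc a b := Ioc_subset_Ioc (le_min hv.1 hu.1) (max_le hv.2 hu.2)
  rw [← intervalIntegral.integral_of_le hu.1, ← intervalIntegral.integral_of_le hv.1,
    intervalIntegral.integral_interval_sub_left (hint hu) (hint hv), ← Real.norm_eq_abs,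
    intervalIntegral.norm_integral_eq_norm_integral_uIoc,
    ← Measure.restrict_restrict_of_subset hvu]
  simpa only [Real.norm_eq_abs] using norm_setIntegral_le_half_integral_norm_of_integral_eq_zero
    measurableSet_uIoc.nullMeasurableSet hf h0

theorem exists_forall_abs_sub_le_half {ι : Type*} [Nonempty ι] {W : ι → ℝ} {d : ℝ}
    (h : ∀ i j, |W i - W j| ≤ d) : ∃ c, ∀ i, |W i - c| ≤ d / 2 := by
  obtain ⟨i₀⟩ := ‹Nonempty ι›
  have hbdd : BddAbove (range W) := ⟨W i₀ + d, by
    rintro _ ⟨i, rfl⟩; linarith [(abs_le.mp (h i i₀)).2]⟩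
  have hbdd' : BddBelow (range W) := ⟨W i₀ - d, by
    rintro _ ⟨i, rfl⟩; linarith [(abs_le.mp (h i₀ i)).2]⟩
  have hosc : (⨆ i, W i) ≤ (⨅ i, W i) + d :=
    ciSup_le fun i => by
      rw [← sub_le_iff_le_add]
      exact le_ciInf fun j => by linarith [(abs_le.mp (h i j)).2]
  refine ⟨((⨆ i, W i) + ⨅ i, W i) / 2, fun i => abs_le.mpr ⟨?_, ?_⟩⟩
  · linarith [ciInf_le hbdd' i]
  · linarith [le_ciSup hbdd i]

theorem abs_setIntegral_Ioc_muI_sub_le {f : Lp ℝ 1 muI} (hf : f ∈ L10) (s t : Icc (0:ℝ) 1) :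
    |(∫ x in Ioc 0 s.1, f x ∂muI) - ∫ x in Ioc 0 t.1, f x ∂muI| ≤ ‖f‖ / 2 := by
  rw [L1.norm_eq_integral_norm]
  unfold muI
  rw [Measure.restrict_restrict_of_subset (Ioc_subset_Ioc_right s.2.2),
    Measure.restrict_restrict_of_subset (Ioc_subset_Ioc_right t.2.2)]
  simp only [Real.norm_eq_abs]
  exact abs_setIntegral_Ioc_sub_le (L1.integrable_coeFn f) hf s.2 t.2

/-- (a) For every `f ∈ L¹(0,1)` with `∫₀¹ f = 0` and `‖f‖₁ ≤ 1` and all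
`u, v ∈ [0,1]`, one has `|Vf(u) − Vf(v)| ≤ 1/2`.  (b) Consequently the second
Kolmogorov number of `V : L¹₀(0,1) → C[0,1]` satisfies `d₂(V) ≤ 1/4`: there is a
subspace `N` of `C[0,1]` of dimension `< 2` such that every `f` in the unit ball of
`L¹₀` satisfies `dist_{C[0,1]}(Vf, N) ≤ 1/4`. -/
theorem oscillation_bound_and_d2_le_quarter :
    (∀ f : ℝ → ℝ, IntegrableOn f (Set.Ioc 0 1) → (∫ s in Set.Ioc (0:ℝ) 1, f s) = 0 →
      (∫ s in Set.Ioc (0:ℝ) 1, |f s|) ≤ 1 → ∀ u ∈ Set.Icc (0:ℝ) 1, ∀ v ∈ Set.Icc (0:ℝ) 1,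
      |(∫ s in Set.Ioc (0:ℝ) u, f s) - ∫ s in Set.Ioc (0:ℝ) v, f s| ≤ 1/2) ∧
    (∃ N : Submodule ℝ C(Set.Icc (0:ℝ) 1, ℝ), Module.finrank ℝ N < 2 ∧
      ∀ f ∈ L10, ‖f‖ ≤ 1 → ∀ ε : ℝ, 0 < ε → ∃ g ∈ N,
        (⨆ t : Set.Icc (0:ℝ) 1,
          |(∫ x in Set.Ioc (0:ℝ) t.1, (f : ℝ → ℝ) x ∂muI) - g t|) ≤ 1/4 + ε) := by
  constructor
  · intro f hf h0 h1 u hu v hv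
    linarith [abs_setIntegral_Ioc_sub_le hf h0 hu hv]
  · refine ⟨ℝ ∙ 1, by rw [finrank_span_singleton one_ne_zero]; norm_num, ?_⟩
    intro f hf hnorm ε _
    have : Nonempty (Icc (0:ℝ) 1) := ⟨⟨0, left_mem_Icc.2 zero_le_one⟩⟩
    obtain ⟨c, hc⟩ := exists_forall_abs_sub_le_half fun s t =>
      (abs_setIntegral_Ioc_muI_sub_le hf s t).trans (div_le_div_of_nonneg_right hnorm two_pos.le)
    refine ⟨c • 1, Submodule.smul_mem _ c (Submodule.mem_span_singleton_self 1),
      ciSup_le fun t => ?_⟩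
    simp only [ContinuousMap.smul_apply, ContinuousMap.one_apply, smul_eq_mul, mul_one]
    linarith [hc t]
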